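/- Let O ⊆ ℝ^d be open, let u : ℝ^d → ℝ be three times continuously differentiable on O, let σ > 0, define y := u − σ L̄u on O, and let ε > 0. Let g : [0,∞) → ℝ be twice continuously differentiable, convex, and nondecreasing. Then for every x ∈ O, σ L̄(g ∘ φ_ε)(x) ≥ g'(φ_ε(x)) (φ(x)²/φ_ε(x) − ‖∇y(x)‖). -/

import Mathlib

open Real MeasureTheory
open scoped BigOperators RealInnerProductSpace

/-- Partial derivative in the `i`-th coordinate direction. -/
noncomputable def pd {d : ℕ} (i : Fin d) (f : EuclideanSpace ℝ (Fin d) → ℝ)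
    (x : EuclideanSpace ℝ (Fin d)) : ℝ :=
  fderiv ℝ f x (EuclideanSpace.single i 1)

/-- The (Gaussian) Ornstein–Uhlenbeck operator `L̄f(x) = Δf(x) − ⟨x, ∇f(x)⟩`. -/
noncomputable def OU {d : ℕ} (f : EuclideanSpace ℝ (Fin d) → ℝ)
    (x : EuclideanSpace ℝ (Fin d)) : ℝ :=
  (∑ i, pd i (pd i f) x) - ⟪x, gradient f x⟫

/-- `φ(x) = ‖∇u(x)‖`. -/
noncomputable def phi {d : ℕ} (u : EuclideanSpace ℝ (Fin d) → ℝ)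
    (x : EuclideanSpace ℝ (Fin d)) : ℝ :=
  ‖gradient u x‖

/-- `φ_ε(x) = √(ε² + ‖∇u(x)‖²)`. -/
noncomputable def phiEps {d : ℕ} (ε : ℝ) (u : EuclideanSpace ℝ (Fin d) → ℝ)
    (x : EuclideanSpace ℝ (Fin d)) : ℝ :=
  Real.sqrt (ε ^ 2 + ‖gradient u x‖ ^ 2)

/-! `L̄` is a diffusion operator: `L̄(G ∘ f) = G'(f) L̄f + G''(f) ‖∇f‖²`. For `g` convex and
nondecreasing this reduces the claim to `σ L̄φ_ε ≥ φ²/φ_ε − ‖∇y‖`. Applying the same rule to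
`φ_ε² = ε² + ‖∇u‖²` and using Bochner's formula
`½ L̄‖∇u‖² = ‖∇²u‖² + ⟨∇u, ∇L̄u⟩ + ‖∇u‖²` (which comes from the commutation
`∂ⱼ L̄ = L̄ ∂ⱼ − ∂ⱼ`) gives `φ_ε L̄φ_ε = ‖∇²u‖² − ‖∇φ_ε‖² + ⟨∇u, ∇L̄u⟩ + ‖∇u‖²`. Kato's inequality
`‖∇φ_ε‖ ≤ ‖∇²u‖` removes the first two terms, and
`σ ⟨∇u, ∇L̄u⟩ = ‖∇u‖² − ⟨∇u, ∇y⟩ ≥ ‖∇u‖² − φ_ε ‖∇y‖` by Cauchy–Schwarz. -/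

open Filter Topology

variable {d : ℕ}

section PartialDerivatives

variable {f g : EuclideanSpace ℝ (Fin d) → ℝ} {x : EuclideanSpace ℝ (Fin d)}

lemma gradient_apply (f : EuclideanSpace ℝ (Fin d) → ℝ) (x : EuclideanSpace ℝ (Fin d)) (i : Fin d) :
    gradient f x i = pd i f x := by
  rw [pd, ← InnerProductSpace.toDual_symm_apply, gradient, EuclideanSpace.inner_single_right]
  simp

lemma inner_gradient (v : EuclideanSpace ℝ (Fin d)) (f : EuclideanSpace ℝ (Fin d) → ℝ)
    (x : EuclideanSpace ℝ (Fin d)) :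
    ⟪v, gradient f x⟫ = ∑ i, v i * pd i f x := by
  simp only [PiLp.inner_apply, gradient_apply, RCLike.inner_apply, conj_trivial, mul_comm]

lemma norm_gradient_sq (f : EuclideanSpace ℝ (Fin d) → ℝ) (x : EuclideanSpace ℝ (Fin d)) :
    ‖gradient f x‖ ^ 2 = ∑ i, pd i f x ^ 2 := by
  simp [EuclideanSpace.real_norm_sq_eq, gradient_apply]

lemma OU_eq_sum (f : EuclideanSpace ℝ (Fin d) → ℝ) (x : EuclideanSpace ℝ (Fin d)) :
    OU f x = ∑ i, (pd i (pd i f) x - x i * pd i f x) := by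
  rw [OU, inner_gradient, Finset.sum_sub_distrib]

lemma HasFDerivAt.pd_eq {f' : EuclideanSpace ℝ (Fin d) →L[ℝ] ℝ} (hf : HasFDerivAt f f' x)
    (i : Fin d) :
    pd i f x = f' (EuclideanSpace.single i 1) := by
  rw [pd, hf.fderiv]

lemma Filter.EventuallyEq.pd_eq (h : f =ᶠ[𝓝 x] g) (i : Fin d) : pd i f x = pd i g x := by
  rw [pd, pd, h.fderiv_eq]

lemma contDiffAt_pd {n m : WithTop ℕ∞} (hf : ContDiffAt ℝ n f x) (hmn : m + 1 ≤ n) (i : Fin d) :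
    ContDiffAt ℝ m (pd i f) x :=
  (hf.fderiv_right hmn).clm_apply contDiffAt_const

lemma pd_sum {ι : Type*} (s : Finset ι) {F : ι → EuclideanSpace ℝ (Fin d) → ℝ}
    (hF : ∀ j ∈ s, DifferentiableAt ℝ (F j) x) (i : Fin d) :
    pd i (fun z => ∑ j ∈ s, F j z) x = ∑ j ∈ s, pd i (F j) x := by
  simp [pd, fderiv_fun_sum hF]

lemma pd_sub (hf : DifferentiableAt ℝ f x) (hg : DifferentiableAt ℝ g x) (i : Fin d) :
    pd i (fun z => f z - g z) x = pd i f x - pd i g x := by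
  simp [pd, fderiv_fun_sub hf hg]

lemma pd_mul (hf : DifferentiableAt ℝ f x) (hg : DifferentiableAt ℝ g x) (i : Fin d) :
    pd i (fun z => f z * g z) x = f x * pd i g x + g x * pd i f x := by
  simp [pd, fderiv_fun_mul hf hg]

lemma pd_const_mul (hf : DifferentiableAt ℝ f x) (c : ℝ) (i : Fin d) :
    pd i (fun z => c * f z) x = c * pd i f x := by
  simp [pd, fderiv_const_mul hf]

lemma pd_const_add (c : ℝ) (f : EuclideanSpace ℝ (Fin d) → ℝ) (i : Fin d) :
    pd i (fun z => c + f z) = pd i f := by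
  ext x
  simp [pd, fderiv_const_add]

lemma pd_comp {G : ℝ → ℝ} (hG : DifferentiableAt ℝ G (f x)) (hf : DifferentiableAt ℝ f x)
    (i : Fin d) : pd i (fun z => G (f z)) x = deriv G (f x) * pd i f x := by
  refine ((hG.hasDerivAt.comp_hasFDerivAt x hf.hasFDerivAt).pd_eq i).trans ?_
  simp [pd]

lemma pd_sq (hf : DifferentiableAt ℝ f x) (i : Fin d) :
    pd i (fun z => f z ^ 2) x = 2 * f x * pd i f x := by
  rw [pd_comp (G := fun t => t ^ 2) (differentiableAt_pow 2) hf]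
  simp

lemma differentiableAt_coord (i : Fin d) (x : EuclideanSpace ℝ (Fin d)) :
    DifferentiableAt ℝ (fun z : EuclideanSpace ℝ (Fin d) => z i) x :=
  (EuclideanSpace.proj i : EuclideanSpace ℝ (Fin d) →L[ℝ] ℝ).differentiableAt

lemma pd_coord (x : EuclideanSpace ℝ (Fin d)) (i j : Fin d) :
    pd j (fun z : EuclideanSpace ℝ (Fin d) => z i) x = if i = j then 1 else 0 := by
  refine ((EuclideanSpace.proj i : EuclideanSpace ℝ (Fin d) →L[ℝ] ℝ).hasFDerivAt.pd_eq j).trans ?_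
  simp

lemma pd_pd_eq_fderiv_fderiv (hf : DifferentiableAt ℝ (fderiv ℝ f) x) (i j : Fin d) :
    pd i (pd j f) x =
      fderiv ℝ (fderiv ℝ f) x (EuclideanSpace.single i 1) (EuclideanSpace.single j 1) := by
  refine ((hf.hasFDerivAt.clm_apply (hasFDerivAt_const _ x)).pd_eq i).trans ?_
  simp

lemma pd_comm (hf : ContDiffAt ℝ 2 f x) (i j : Fin d) : pd i (pd j f) x = pd j (pd i f) x := by
  have hdf : DifferentiableAt ℝ (fderiv ℝ f) x :=
    (hf.fderiv_right (m := 1) (by norm_num)).differentiableAt one_ne_zero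
  rw [pd_pd_eq_fderiv_fderiv hdf, pd_pd_eq_fderiv_fderiv hdf,
    hf.isSymmSndFDerivAt (by simp)]

end PartialDerivatives

section OrnsteinUhlenbeck

variable {f u : EuclideanSpace ℝ (Fin d) → ℝ} {x : EuclideanSpace ℝ (Fin d)}

lemma ContDiffAt.differentiableAt_pd (hf : ContDiffAt ℝ 2 f x) (i : Fin d) :
    DifferentiableAt ℝ (pd i f) x :=
  (contDiffAt_pd hf (m := 1) (by norm_num) i).differentiableAt one_ne_zero

lemma ContDiffAt.eventually_differentiableAt {n : ℕ} {F : Type*} [NormedAddCommGroup F]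
    [NormedSpace ℝ F] {f : F → ℝ} {x : F} (hf : ContDiffAt ℝ n f x) (hn : n ≠ 0) :
    ∀ᶠ z in 𝓝 x, DifferentiableAt ℝ f z :=
  (hf.eventually (by simp)).mono fun _ hz => hz.differentiableAt (by exact_mod_cast hn)

lemma OU_sum {ι : Type*} (s : Finset ι) {F : ι → EuclideanSpace ℝ (Fin d) → ℝ}
    (hF : ∀ j ∈ s, ContDiffAt ℝ 2 (F j) x) :
    OU (fun z => ∑ j ∈ s, F j z) x = ∑ j ∈ s, OU (F j) x := by
  have hpd (i : Fin d) :
      pd i (fun z => ∑ j ∈ s, F j z) =ᶠ[𝓝 x] fun z => ∑ j ∈ s, pd i (F j) z := by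
    have : ∀ᶠ z in 𝓝 x, ∀ j ∈ s, DifferentiableAt ℝ (F j) z :=
      (eventually_all_finset s).2 fun j hj => (hF j hj).eventually_differentiableAt two_ne_zero
    filter_upwards [this] with z hz using pd_sum s hz i
  simp only [OU_eq_sum, (hpd _).pd_eq, pd_sum s fun j hj => (hF j hj).differentiableAt_pd _,
    pd_sum s fun j hj => (hF j hj).differentiableAt two_ne_zero, Finset.mul_sum,
    ← Finset.sum_sub_distrib]
  exact Finset.sum_comm

lemma OU_comp {G : ℝ → ℝ} (hf : ContDiffAt ℝ 2 f x) (hG : ContDiffAt ℝ 2 G (f x)) :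
    OU (fun z => G (f z)) x =
      deriv G (f x) * OU f x + deriv (deriv G) (f x) * ‖gradient f x‖ ^ 2 := by
  have hfx : DifferentiableAt ℝ f x := hf.differentiableAt two_ne_zero
  have hGx : DifferentiableAt ℝ G (f x) := hG.differentiableAt two_ne_zero
  have hG'x : DifferentiableAt ℝ (deriv G) (f x) :=
    (hG.derivWithin (m := 1) (by norm_num)).differentiableAt one_ne_zero
  have hpd (i : Fin d) : pd i (fun z => G (f z)) =ᶠ[𝓝 x] fun z => deriv G (f z) * pd i f z := by
    filter_upwards [hf.eventually_differentiableAt two_ne_zero,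
      hf.continuousAt.eventually (hG.eventually_differentiableAt two_ne_zero)] with z hfz hGz
    exact pd_comp hGz hfz i
  have hpdpd (i : Fin d) : pd i (pd i fun z => G (f z)) x =
      deriv G (f x) * pd i (pd i f) x + deriv (deriv G) (f x) * pd i f x ^ 2 := by
    rw [(hpd i).pd_eq,
      pd_mul (f := fun z => deriv G (f z)) (hG'x.comp x hfx) (hf.differentiableAt_pd i),
      pd_comp hG'x hfx]
    ring
  simp only [OU_eq_sum, hpdpd, pd_comp hGx hfx, norm_gradient_sq, Finset.mul_sum,
    ← Finset.sum_add_distrib]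
  exact Finset.sum_congr rfl fun i _ => by ring

lemma OU_sq (hf : ContDiffAt ℝ 2 f x) :
    OU (fun z => f z ^ 2) x = 2 * f x * OU f x + 2 * ‖gradient f x‖ ^ 2 := by
  have hsq : deriv (fun t : ℝ => t ^ 2) = fun t => 2 * t := by ext; simp
  rw [OU_comp (G := fun t => t ^ 2) hf (contDiffAt_id.pow 2), hsq]
  simp

lemma OU_const_add (c : ℝ) (f : EuclideanSpace ℝ (Fin d) → ℝ) :
    OU (fun z => c + f z) = OU f := by
  ext x
  simp only [OU_eq_sum, pd_const_add]

end OrnsteinUhlenbeck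

section Bochner

variable {u : EuclideanSpace ℝ (Fin d) → ℝ} {x : EuclideanSpace ℝ (Fin d)}

noncomputable def hessNormSq (u : EuclideanSpace ℝ (Fin d) → ℝ) (x : EuclideanSpace ℝ (Fin d)) :
    ℝ :=
  ∑ i, ∑ j, pd i (pd j u) x ^ 2

lemma contDiffAt_gradient {n m : WithTop ℕ∞} (hu : ContDiffAt ℝ n u x) (hmn : m + 1 ≤ n) :
    ContDiffAt ℝ m (gradient u) x :=
  (InnerProductSpace.toDual ℝ _).symm.contDiff.contDiffAt.comp x (hu.fderiv_right hmn)

lemma differentiableAt_OU (hu : ContDiffAt ℝ 3 u x) : DifferentiableAt ℝ (OU u) x := by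
  rw [show OU u = fun z => ∑ i, (pd i (pd i u) z - z i * pd i u z) from funext (OU_eq_sum u)]
  refine DifferentiableAt.fun_sum fun i _ => DifferentiableAt.sub ?_ ?_
  · exact (contDiffAt_pd hu (m := 2) (by norm_num) i).differentiableAt_pd i
  · exact (differentiableAt_coord i x).fun_mul ((hu.of_le (by norm_num)).differentiableAt_pd i)

lemma pd_OU (hu : ContDiffAt ℝ 3 u x) (j : Fin d) :
    pd j (OU u) x = OU (pd j u) x - pd j u x := by
  have hu2 : ContDiffAt ℝ 2 u x := hu.of_le (by norm_num)
  have hpd2 (i : Fin d) : ContDiffAt ℝ 2 (pd i u) x := contDiffAt_pd hu (by norm_num) i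
  have hcomm (i : Fin d) : pd j (pd i u) =ᶠ[𝓝 x] pd i (pd j u) := by
    filter_upwards [hu.eventually (by simp)] with z hz using pd_comm (hz.of_le (by norm_num)) j i
  have hterm (i : Fin d) : pd j (fun z => pd i (pd i u) z - z i * pd i u z) x =
      pd i (pd i (pd j u)) x - (x i * pd i (pd j u) x + pd i u x * if i = j then 1 else 0) := by
    rw [pd_sub ((hpd2 i).differentiableAt_pd i)
        ((differentiableAt_coord i x).fun_mul (hu2.differentiableAt_pd i)),
      pd_mul (differentiableAt_coord i x) (hu2.differentiableAt_pd i), pd_coord,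
      pd_comm (hpd2 i), (hcomm i).pd_eq, pd_comm hu2 j i]
  rw [show OU u = fun z => ∑ i, (pd i (pd i u) z - z i * pd i u z) from funext (OU_eq_sum u),
    pd_sum _ fun i _ => ((hpd2 i).differentiableAt_pd i).fun_sub
      ((differentiableAt_coord i x).fun_mul (hu2.differentiableAt_pd i))]
  simp only [hterm, OU_eq_sum, mul_ite, mul_one, mul_zero, sub_add_eq_sub_sub,
    Finset.sum_sub_distrib, Finset.sum_ite_eq', Finset.mem_univ, if_true]

lemma OU_norm_gradient_sq (hu : ContDiffAt ℝ 3 u x) :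
    OU (fun z => ‖gradient u z‖ ^ 2) x =
      2 * hessNormSq u x + 2 * ⟪gradient u x, gradient (OU u) x⟫ +
        2 * ‖gradient u x‖ ^ 2 := by
  have hpd2 (j : Fin d) : ContDiffAt ℝ 2 (pd j u) x := contDiffAt_pd hu (by norm_num) j
  simp_rw [norm_gradient_sq u]
  rw [OU_sum _ fun j _ => (hpd2 j).pow 2]
  simp only [OU_sq (hpd2 _), norm_gradient_sq, inner_gradient, gradient_apply, pd_OU hu,
    hessNormSq, Finset.mul_sum]
  rw [Finset.sum_comm (s := Finset.univ) (t := Finset.univ), ← Finset.sum_add_distrib,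
    ← Finset.sum_add_distrib]
  exact Finset.sum_congr rfl fun j _ => by ring

lemma norm_gradient_norm_gradient_sq_le (hu : ContDiffAt ℝ 2 u x) :
    ‖gradient (fun z => ‖gradient u z‖ ^ 2) x‖ ^ 2 ≤
      4 * ‖gradient u x‖ ^ 2 * hessNormSq u x := by
  have hpd (i : Fin d) : pd i (fun z => ‖gradient u z‖ ^ 2) x =
      2 * ∑ j, pd j u x * pd i (pd j u) x := by
    simp_rw [norm_gradient_sq u]
    rw [pd_sum _ fun j _ => (hu.differentiableAt_pd j).fun_pow 2]
    simp only [pd_sq (hu.differentiableAt_pd _), Finset.mul_sum, mul_assoc]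
  rw [norm_gradient_sq (fun z => ‖gradient u z‖ ^ 2) x, norm_gradient_sq u x, hessNormSq,
    Finset.mul_sum]
  refine Finset.sum_le_sum fun i _ => ?_
  rw [hpd i, mul_pow]
  nlinarith [Finset.sum_mul_sq_le_sq_mul_sq Finset.univ (fun j => pd j u x)
    (fun j => pd i (pd j u) x)]

end Bochner

section Regularization

variable {u y : EuclideanSpace ℝ (Fin d) → ℝ} {x : EuclideanSpace ℝ (Fin d)} {ε σ : ℝ}

lemma phiEps_sq (ε : ℝ) (u : EuclideanSpace ℝ (Fin d) → ℝ) (x : EuclideanSpace ℝ (Fin d)) :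
    phiEps ε u x ^ 2 = ε ^ 2 + ‖gradient u x‖ ^ 2 :=
  Real.sq_sqrt (by positivity)

lemma phiEps_pos (hε : ε ≠ 0) (u : EuclideanSpace ℝ (Fin d) → ℝ) (x : EuclideanSpace ℝ (Fin d)) :
    0 < phiEps ε u x :=
  Real.sqrt_pos.2 (by positivity)

lemma norm_gradient_le_phiEps (ε : ℝ) (u : EuclideanSpace ℝ (Fin d) → ℝ)
    (x : EuclideanSpace ℝ (Fin d)) : ‖gradient u x‖ ≤ phiEps ε u x :=
  Real.le_sqrt_of_sq_le (le_add_of_nonneg_left (sq_nonneg ε))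

lemma contDiffAt_phiEps (hu : ContDiffAt ℝ 3 u x) (hε : ε ≠ 0) :
    ContDiffAt ℝ 2 (phiEps ε u) x :=
  (contDiffAt_const.add ((contDiffAt_gradient hu (by norm_num)).norm_sq ℝ)).sqrt
    (by positivity)

lemma norm_gradient_phiEps_sq_le (hu : ContDiffAt ℝ 3 u x) (hε : ε ≠ 0) :
    ‖gradient (phiEps ε u) x‖ ^ 2 ≤ hessNormSq u x := by
  have hpd (i : Fin d) : pd i (fun z => ‖gradient u z‖ ^ 2) x =
      2 * phiEps ε u x * pd i (phiEps ε u) x := by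
    rw [← pd_sq ((contDiffAt_phiEps hu hε).differentiableAt two_ne_zero), funext (phiEps_sq ε u),
      pd_const_add]
  have hgrad : ‖gradient (fun z => ‖gradient u z‖ ^ 2) x‖ ^ 2 =
      4 * phiEps ε u x ^ 2 * ‖gradient (phiEps ε u) x‖ ^ 2 := by
    rw [norm_gradient_sq (fun z => ‖gradient u z‖ ^ 2) x, norm_gradient_sq (phiEps ε u) x,
      Finset.mul_sum]
    exact Finset.sum_congr rfl fun i _ => by rw [hpd]; ring
  have hkato := norm_gradient_norm_gradient_sq_le (hu.of_le (by norm_num))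
  have hu_le : ‖gradient u x‖ ^ 2 ≤ phiEps ε u x ^ 2 := by
    rw [phiEps_sq]
    exact le_add_of_nonneg_left (sq_nonneg ε)
  have hH : 0 ≤ hessNormSq u x := by unfold hessNormSq; positivity
  rw [hgrad] at hkato
  refine le_of_mul_le_mul_left ?_ (by positivity [phiEps_pos hε u x] : 0 < 4 * phiEps ε u x ^ 2)
  nlinarith [mul_le_mul_of_nonneg_right hu_le hH]

lemma phiEps_mul_OU_phiEps (hu : ContDiffAt ℝ 3 u x) (hε : ε ≠ 0) :
    phiEps ε u x * OU (phiEps ε u) x =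
      hessNormSq u x + ⟪gradient u x, gradient (OU u) x⟫ + ‖gradient u x‖ ^ 2 -
        ‖gradient (phiEps ε u) x‖ ^ 2 := by
  have h := OU_sq (contDiffAt_phiEps hu hε)
  rw [funext (phiEps_sq ε u), OU_const_add, OU_norm_gradient_sq hu] at h
  linarith

lemma inner_gradient_eq_of_eventuallyEq_sub_OU (hu : ContDiffAt ℝ 3 u x)
    (hy : y =ᶠ[𝓝 x] fun z => u z - σ * OU u z) :
    ⟪gradient u x, gradient y x⟫ =
      ‖gradient u x‖ ^ 2 - σ * ⟪gradient u x, gradient (OU u) x⟫ := by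
  have hOU := differentiableAt_OU hu
  simp only [inner_gradient, gradient_apply, hy.pd_eq, norm_gradient_sq,
    pd_sub (hu.differentiableAt (by norm_num)) (hOU.const_mul σ), pd_const_mul hOU,
    Finset.mul_sum, ← Finset.sum_sub_distrib]
  exact Finset.sum_congr rfl fun j _ => by ring

lemma div_phiEps_sub_le_mul_OU_phiEps (hu : ContDiffAt ℝ 3 u x) (hσ : 0 ≤ σ) (hε : ε ≠ 0)
    (hy : y =ᶠ[𝓝 x] fun z => u z - σ * OU u z) :
    phi u x ^ 2 / phiEps ε u x - ‖gradient y x‖ ≤ σ * OU (phiEps ε u) x := by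
  have hr := phiEps_pos hε u x
  have hbochner : ⟪gradient u x, gradient (OU u) x⟫ + ‖gradient u x‖ ^ 2 ≤
      phiEps ε u x * OU (phiEps ε u) x := by
    rw [phiEps_mul_OU_phiEps hu hε]
    linarith [norm_gradient_phiEps_sq_le hu hε]
  have hcs : ⟪gradient u x, gradient y x⟫ ≤ phiEps ε u x * ‖gradient y x‖ :=
    (real_inner_le_norm _ _).trans
      (mul_le_mul_of_nonneg_right (norm_gradient_le_phiEps ε u x) (norm_nonneg _))
  have hy' := inner_gradient_eq_of_eventuallyEq_sub_OU hu hy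
  rw [phi, sub_le_iff_le_add, div_le_iff₀ hr]
  nlinarith [mul_le_mul_of_nonneg_left hbochner hσ, mul_nonneg hσ (sq_nonneg ‖gradient u x‖)]

end Regularization

lemma MonotoneOn.deriv_nonneg_of_mem_nhds {g : ℝ → ℝ} {s : Set ℝ} {t : ℝ} (hg : MonotoneOn g s)
    (hs : s ∈ 𝓝 t) : 0 ≤ deriv g t := by
  rw [← derivWithin_of_mem_nhds hs]
  exact hg.derivWithin_nonneg

theorem ou_of_convex_composition_lower_bound {d : ℕ}
    (O : Set (EuclideanSpace ℝ (Fin d))) (hO : IsOpen O)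
    (u : EuclideanSpace ℝ (Fin d) → ℝ) (hu : ContDiffOn ℝ 3 u O)
    (σ : ℝ) (hσ : 0 < σ) (y : EuclideanSpace ℝ (Fin d) → ℝ)
    (hy : ∀ x ∈ O, y x = u x - σ * OU u x) (ε : ℝ) (hε : 0 < ε)
    (g : ℝ → ℝ) (hg : ContDiffOn ℝ 2 g (Set.Ici 0))
    (hgconv : ConvexOn ℝ (Set.Ici 0) g) (hgmono : MonotoneOn g (Set.Ici 0)) :
    ∀ x ∈ O,
      σ * OU (fun z => g (phiEps ε u z)) x ≥
        deriv g (phiEps ε u x) *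
          ((phi u x) ^ 2 / phiEps ε u x - ‖gradient y x‖) := by
  intro x hx
  have hux : ContDiffAt ℝ 3 u x := hu.contDiffAt (hO.mem_nhds hx)
  have hr : 0 < phiEps ε u x := phiEps_pos hε.ne' u x
  have hgd : ∀ t ∈ Set.Ioi (0 : ℝ), DifferentiableAt ℝ g t := fun t ht =>
    (hg.contDiffAt (Ici_mem_nhds ht)).differentiableAt two_ne_zero
  have hg' : 0 ≤ deriv g (phiEps ε u x) := hgmono.deriv_nonneg_of_mem_nhds (Ici_mem_nhds hr)
  have hg'' : 0 ≤ deriv (deriv g) (phiEps ε u x) :=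
    ((hgconv.subset Set.Ioi_subset_Ici_self (convex_Ioi 0)).monotoneOn_deriv hgd
      ).deriv_nonneg_of_mem_nhds (Ioi_mem_nhds hr)
  have hbound := div_phiEps_sub_le_mul_OU_phiEps hux hσ.le hε.ne'
    (eventually_of_mem (hO.mem_nhds hx) hy)
  rw [OU_comp (contDiffAt_phiEps hux hε.ne') (hg.contDiffAt (Ici_mem_nhds hr))]
  nlinarith [mul_le_mul_of_nonneg_left hbound hg',
    mul_nonneg (mul_nonneg hσ.le hg'') (sq_nonneg ‖gradient (phiEps ε u) x‖)]
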